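/- arXiv:math/9909201 — 2 statements merged into one kernel-verified Lean document; each statement's English description precedes it below -/
import Mathlib

section
/- Lemma 1.2: Let q and q' be similar integral quadratic forms in an odd number of variables m = 2k+1 ≥ 3 and let p be a prime not dividing det q. Then R(q, p²·q') is the disjoint union of R*(q, p²·q') and p·R(q, q'); here R(q,q') ⊆ GL_m(ℤ), so in particular this part is empty when q and q' are not integrally equivalent. Moreover, every automorph in p·R(q,q') lies in the double coset GL_m(ℤ)·(p·1_m)·GL_m(ℤ), while every primitive automorph M ∈ R*(q, p²·q') lies in GL_m(ℤ)·D_p(d)·GL_m(ℤ) for some d with 1 ≤ d ≤ k (and b = m − 2d). -/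
open Matrix

/-- An integral quadratic form in `m` variables, encoded by its matrix:
a symmetric integer matrix with even diagonal entries. -/
def IsIntegralQF {m : ℕ} (Q : Matrix (Fin m) (Fin m) ℤ) : Prop :=
  Q.IsSymm ∧ ∀ i, 2 ∣ Q i i

/-- `R(q,q')`: integral representations of the form with matrix `Q'` by the form
with matrix `Q`. -/
def Reps {m n : ℕ} (Q : Matrix (Fin m) (Fin m) ℤ) (Q' : Matrix (Fin n) (Fin n) ℤ) :
    Set (Matrix (Fin m) (Fin n) ℤ) :=
  {A | Aᵀ * Q * A = Q'}

/-- `R*(q,q')`: primitive integral representations (entries have gcd 1). -/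
def PrimReps {m n : ℕ} (Q : Matrix (Fin m) (Fin m) ℤ) (Q' : Matrix (Fin n) (Fin n) ℤ) :
    Set (Matrix (Fin m) (Fin n) ℤ) :=
  {A | Aᵀ * Q * A = Q' ∧
    Finset.gcd Finset.univ (fun ij : Fin m × Fin n => A ij.1 ij.2) = 1}

/-- `q'` is similar to `q`: equal determinants and `R(q, a·q')` nonempty for some `a`
coprime to `det q`. -/
def SimilarQF {m : ℕ} (Q Q' : Matrix (Fin m) (Fin m) ℤ) : Prop :=
  Q'.det = Q.det ∧ ∃ a : ℤ, IsCoprime a Q.det ∧ (Reps Q (a • Q')).Nonempty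

/-- membership in the double coset `GL_m(ℤ)·D·GL_m(ℤ)`. -/
def InDoubleCoset {m : ℕ} (D M : Matrix (Fin m) (Fin m) ℤ) : Prop :=
  ∃ U V : Matrix (Fin m) (Fin m) ℤ, IsUnit U.det ∧ IsUnit V.det ∧ M = U * D * V

/-- The matrix `D_p(d)` of the form (1.2): diagonal with `d` entries `1`,
then `m - 2d` entries `p`, then `d` entries `p²`. -/
def Dmat (p m d : ℕ) : Matrix (Fin m) (Fin m) ℤ :=
  Matrix.diagonal fun i =>
    if (i : ℕ) < d then 1 else if (i : ℕ) < m - d then (p : ℤ) else (p : ℤ)^2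

/-!
By the Smith normal form, `A ∈ R(q, p²q')` lies in `GL_m(ℤ) · diag(w) · GL_m(ℤ)`. Taking
determinants in `ᵀA Q A = p² Q'` gives `|det A| = p^m`, so `|wᵢ| = p^eᵢ` with `∑ eᵢ = m`, and
`(adj Q' · ᵀA · Q) · A = p² det Q · 1` with `p ∤ det Q` forces `eᵢ ≤ 2`. Hence the exponents `0`
and `2` occur equally often, say `d` times, and a permutation carries `diag(p^eᵢ)` to `D_p(d)`.
If `A` is primitive then `d ≥ 1`, as otherwise `p` divides every entry of `A`. If it is not, the
gcd `g` of its entries satisfies `g^m ∣ det A = ±p^m`, so `g = p` and `A = p M` with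
`M ∈ R(q, q')`; every such `M` has `det M = ±1`.
-/

open Finset

theorem Matrix.exists_eq_mul_diagonal_mul {R ι : Type*} [CommRing R] [IsDomain R]
    [IsPrincipalIdealRing R] [Fintype ι] [DecidableEq ι] (A : Matrix ι ι R) (hA : A.det ≠ 0) :
    ∃ (U V : Matrix ι ι R) (w : ι → R), IsUnit U.det ∧ IsUnit V.det ∧
      A = U * diagonal w * V := by
  set b := Pi.basisFun R ι
  have hinj : Function.Injective A.mulVecLin := by
    rw [← LinearMap.ker_eq_bot, Matrix.ker_mulVecLin_eq_bot_iff]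
    intro v hv
    by_contra hv0
    exact hA (Matrix.exists_mulVec_eq_zero_iff.mp ⟨v, hv0, hv⟩)
  set N := LinearMap.range A.mulVecLin
  set φ : (ι → R) ≃ₗ[R] N := LinearEquiv.ofInjective _ hinj
  obtain ⟨bM, w, bN, hsnf⟩ := N.exists_smith_normal_form_of_rank_eq b φ.finrank_eq.symm
  have hsub : LinearMap.toMatrix bN b N.subtype = b.toMatrix bM * diagonal w := by
    ext i j
    simp [LinearMap.toMatrix_apply, hsnf, Module.Basis.toMatrix_apply, mul_comm]
  have hA : A = LinearMap.toMatrix b b (N.subtype ∘ₗ φ.toLinearMap) := by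
    rw [LinearMap.toMatrix_eq_toMatrix']
    exact (LinearMap.toMatrix'_toLin' A).symm
  have := b.invertibleToMatrix bM
  refine ⟨b.toMatrix bM, LinearMap.toMatrix b bN φ, w, isUnit_det_of_invertible _,
    LinearEquiv.isUnit_det φ b bN, ?_⟩
  rw [hA, LinearMap.toMatrix_comp _ bN, hsub]

section DoubleCoset

variable {m : ℕ}

theorem InDoubleCoset.trans {D M N : Matrix (Fin m) (Fin m) ℤ} (hDM : InDoubleCoset D M)
    (hMN : InDoubleCoset M N) : InDoubleCoset D N := by
  obtain ⟨U, V, hU, hV, rfl⟩ := hDM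
  obtain ⟨U', V', hU', hV', rfl⟩ := hMN
  refine ⟨U' * U, V * V', ?_, ?_, ?_⟩
  · rw [det_mul]; exact hU'.mul hU
  · rw [det_mul]; exact hV.mul hV'
  · simp only [Matrix.mul_assoc]

theorem InDoubleCoset.dvd_apply {D M : Matrix (Fin m) (Fin m) ℤ} (h : InDoubleCoset D M) {c : ℤ}
    (hD : ∀ i j, c ∣ D i j) (i j : Fin m) : c ∣ M i j := by
  obtain ⟨U, V, -, -, rfl⟩ := h
  rw [mul_apply]
  refine Finset.dvd_sum fun l _ => Dvd.dvd.mul_right ?_ _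
  rw [mul_apply]
  exact Finset.dvd_sum fun l' _ => Dvd.dvd.mul_left (hD l' l) _

theorem inDoubleCoset_diagonal_comp_perm (f : Fin m → ℤ) (σ : Equiv.Perm (Fin m)) :
    InDoubleCoset (diagonal f) (diagonal (f ∘ σ)) := by
  refine ⟨(1 : Matrix _ _ ℤ).submatrix σ (Equiv.refl _),
    (1 : Matrix _ _ ℤ).submatrix (Equiv.refl _) σ, ?_, ?_, ?_⟩
  · simp [det_permute]
  · simp [det_permute']
  · rw [one_submatrix_mul, mul_submatrix_one]
    simp [submatrix_diagonal_equiv]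

theorem inDoubleCoset_diagonal_natAbs (w : Fin m → ℤ) :
    InDoubleCoset (diagonal fun i => ((w i).natAbs : ℤ)) (diagonal w) := by
  refine ⟨diagonal fun i => if 0 ≤ w i then 1 else -1, 1, ?_, by simp, ?_⟩
  · rw [det_diagonal]
    exact IsUnit.prod_univ_iff.mpr fun i => by split_ifs <;> simp
  · rw [diagonal_mul_diagonal, Matrix.mul_one]
    congr 1
    ext i
    split_ifs with h <;> omega

end DoubleCoset

theorem Equiv.Perm.exists_comp_eq_of_card_fiber_eq {ι α : Type*} [Fintype ι] [DecidableEq α]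
    {f g : ι → α} (h : ∀ a, #{i | f i = a} = #{i | g i = a}) :
    ∃ σ : Equiv.Perm ι, g ∘ σ = f := by
  classical
  refine ⟨Equiv.ofFiberEquiv fun a => Fintype.equivOfCardEq ?_,
    funext (Equiv.ofFiberEquiv_map _)⟩
  simpa only [Fintype.card_subtype] using h a

section Exponents

variable {ι : Type*} [Fintype ι] {e : ι → ℕ}

theorem card_fiber_add_of_le_two (he : ∀ i, e i ≤ 2) :
    #{i | e i = 0} + #{i | e i = 1} + #{i | e i = 2} = Fintype.card ι ∧
      #{i | e i = 1} + 2 * #{i | e i = 2} = ∑ i, e i := by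
  simp only [card_filter, mul_sum, ← sum_add_distrib, Fintype.card_eq_sum_ones]
  constructor <;> refine sum_congr rfl fun i _ => ?_ <;> have := he i <;> split_ifs <;> omega

theorem card_fiber_eq_of_le_two {e' : ι → ℕ} (he : ∀ i, e i ≤ 2) (he' : ∀ i, e' i ≤ 2)
    (hsum : ∑ i, e i = ∑ i, e' i) (h0 : #{i | e i = 0} = #{i | e' i = 0}) (t : ℕ) :
    #{i | e i = t} = #{i | e' i = t} := by
  obtain ⟨h, hs⟩ := card_fiber_add_of_le_two he
  obtain ⟨h', hs'⟩ := card_fiber_add_of_le_two he'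
  match t with
  | 0 => exact h0
  | 1 => omega
  | 2 => omega
  | t + 3 =>
    rw [filter_false_of_mem fun i _ => by have := he i; omega,
      filter_false_of_mem fun i _ => by have := he' i; omega]

theorem two_mul_card_fiber_zero_le (he : ∀ i, e i ≤ 2)
    (hsum : ∑ i, e i = Fintype.card ι) : 2 * #{i | e i = 0} ≤ Fintype.card ι := by
  have := card_fiber_add_of_le_two he
  omega

end Exponents

def dmatExponent (m d : ℕ) (i : Fin m) : ℕ :=
  if (i : ℕ) < d then 0 else if (i : ℕ) < m - d then 1 else 2

theorem dmat_eq_diagonal_pow (p m d : ℕ) :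
    Dmat p m d = diagonal fun i => (p : ℤ) ^ dmatExponent m d i := by
  unfold Dmat dmatExponent
  congr 1
  ext i
  split_ifs <;> simp

section dmatExponent

variable {m d : ℕ}

theorem dmatExponent_le_two (i : Fin m) : dmatExponent m d i ≤ 2 := by
  unfold dmatExponent; grind

theorem dmatExponent_eq_zero_iff (i : Fin m) : dmatExponent m d i = 0 ↔ (i : ℕ) < d := by
  unfold dmatExponent; grind

theorem dmatExponent_eq_two_iff (hd : 2 * d ≤ m) (i : Fin m) :
    dmatExponent m d i = 2 ↔ ¬(i : ℕ) < m - d := by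
  unfold dmatExponent; grind

theorem card_dmatExponent_eq_zero (hd : d ≤ m) : #{i | dmatExponent m d i = 0} = d := by
  rw [filter_congr fun i _ => dmatExponent_eq_zero_iff i, Fin.card_filter_val_lt, min_eq_right hd]

theorem card_dmatExponent_eq_two (hd : 2 * d ≤ m) : #{i | dmatExponent m d i = 2} = d := by
  have := card_filter_add_card_filter_not (s := univ) fun i : Fin m => (i : ℕ) < m - d
  rw [filter_congr fun i _ => dmatExponent_eq_two_iff hd i]
  rw [Fin.card_filter_val_lt, card_univ, Fintype.card_fin] at this
  omega

theorem sum_dmatExponent (hd : 2 * d ≤ m) : ∑ i, dmatExponent m d i = m := by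
  obtain ⟨hcard, hsum⟩ := card_fiber_add_of_le_two (dmatExponent_le_two (m := m) (d := d))
  rw [card_dmatExponent_eq_zero (by omega), card_dmatExponent_eq_two hd, Fintype.card_fin] at *
  omega

end dmatExponent

theorem inDoubleCoset_dmat_diagonal_pow {m : ℕ} (p : ℕ) {e : Fin m → ℕ}
    (he : ∀ i, e i ≤ 2) (hsum : ∑ i, e i = m) :
    InDoubleCoset (Dmat p m #{i | e i = 0}) (diagonal fun i => (p : ℤ) ^ e i) := by
  obtain ⟨hcard, hcard'⟩ := card_fiber_add_of_le_two he
  simp only [Fintype.card_fin] at hcard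
  set d := #{i | e i = 0}
  have hd : 2 * d ≤ m := by omega
  obtain ⟨σ, hσ⟩ := Equiv.Perm.exists_comp_eq_of_card_fiber_eq
    (card_fiber_eq_of_le_two he dmatExponent_le_two
      (hsum.trans (sum_dmatExponent hd).symm) (card_dmatExponent_eq_zero (by omega)).symm)
  have hpow : (fun i => (p : ℤ) ^ e i) = (fun i => (p : ℤ) ^ dmatExponent m d i) ∘ σ := by
    rw [← hσ]; rfl
  rw [dmat_eq_diagonal_pow, hpow]
  exact inDoubleCoset_diagonal_comp_perm _ σ

theorem exists_pow_eq_of_prod_eq_prime_pow {ι : Type*} [Fintype ι] {p n : ℕ} (hp : p.Prime)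
    {a : ι → ℕ} (h : ∏ i, a i = p ^ n) :
    ∃ e : ι → ℕ, (∀ i, a i = p ^ e i) ∧ ∑ i, e i = n := by
  have hpow (i : ι) : ∃ k, a i = p ^ k :=
    ((Nat.dvd_prime_pow hp).1 (h ▸ dvd_prod_of_mem a (mem_univ i))).imp fun _ => And.right
  choose e he using hpow
  refine ⟨e, he, Nat.pow_right_injective hp.two_le ?_⟩
  simp only [← h, he, prod_pow_eq_pow_sum]

theorem Nat.Prime.le_of_pow_dvd_pow_mul {p a e n : ℕ} (hp : p.Prime) (hpn : ¬p ∣ n)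
    (h : p ^ e ∣ p ^ a * n) : e ≤ a :=
  (Nat.pow_dvd_pow_iff_le_right hp.one_lt).1 <|
    ((hp.coprime_iff_not_dvd.2 hpn).pow_left e).dvd_of_dvd_mul_right h

theorem Matrix.dvd_of_mul_eq_smul_one {R n : Type*} [CommRing R] [Fintype n] [DecidableEq n]
    {B U V : Matrix n n R} {w : n → R} {s : R} (hV : IsUnit V.det)
    (h : B * (U * diagonal w * V) = s • 1) (i : n) : w i ∣ s := by
  have hBUw : (V * B * U) * diagonal w = s • 1 := by
    calc V * B * U * diagonal w = V * (B * (U * diagonal w * V)) * V⁻¹ := by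
          simp only [Matrix.mul_assoc, mul_nonsing_inv _ hV, Matrix.mul_one]
      _ = s • 1 := by
          rw [h, Matrix.mul_smul, Matrix.mul_one, Matrix.smul_mul, mul_nonsing_inv _ hV]
  refine ⟨(V * B * U) i i, ?_⟩
  simpa [mul_comm] using (congrFun (congrFun hBUw i) i).symm

theorem gcd_entries_ne_one_of_dvd {m n : ℕ} {A : Matrix (Fin m) (Fin n) ℤ} {c : ℤ}
    (hc : ¬IsUnit c) (h : ∀ i j, c ∣ A i j) :
    univ.gcd (fun ij : Fin m × Fin n => A ij.1 ij.2) ≠ 1 := fun h1 =>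
  hc (isUnit_of_dvd_one (h1 ▸ dvd_gcd fun ij _ => h ij.1 ij.2))

theorem card_fiber_zero_pos_of_inDoubleCoset {m : ℕ} {A : Matrix (Fin m) (Fin m) ℤ} {c : ℤ}
    {e : Fin m → ℕ} (hc : ¬IsUnit c) (hA : InDoubleCoset (diagonal fun i => c ^ e i) A)
    (hprim : univ.gcd (fun ij : Fin m × Fin m => A ij.1 ij.2) = 1) : 0 < #{i | e i = 0} := by
  refine Nat.pos_of_ne_zero fun h0 =>
    gcd_entries_ne_one_of_dvd hc (hA.dvd_apply fun i j => ?_) hprim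
  have hei : e i ≠ 0 := filter_eq_empty_iff.1 (card_eq_zero.1 h0) (mem_univ i)
  rw [diagonal_apply]
  split_ifs
  exacts [dvd_pow_self c hei, dvd_zero c]

theorem Matrix.exists_eq_smul_of_forall_dvd {m n : Type*} {A : Matrix m n ℤ} {c : ℤ}
    (h : ∀ i j, c ∣ A i j) : ∃ B : Matrix m n ℤ, A = c • B :=
  ⟨of fun i j => A i j / c, ext fun i j => (Int.mul_ediv_cancel' (h i j)).symm⟩

section Representations

variable {m : ℕ} {Q Q' A : Matrix (Fin m) (Fin m) ℤ}

theorem natAbs_det_of_mem_reps_sq_smul (hdet : Q'.det = Q.det) (hQ : Q.det ≠ 0) {c : ℤ}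
    (hA : A ∈ Reps Q (c ^ 2 • Q')) : A.det.natAbs = c.natAbs ^ m := by
  have h := congrArg det hA
  rw [det_mul, det_mul, det_transpose, det_smul, Fintype.card_fin, hdet] at h
  rw [← Int.natAbs_pow, Int.natAbs_eq_iff_sq_eq]
  exact mul_right_cancel₀ hQ (by linear_combination h)

theorem isUnit_det_of_mem_reps (hdet : Q'.det = Q.det) (hQ : Q.det ≠ 0) (hA : A ∈ Reps Q Q') :
    IsUnit A.det := by
  rw [Int.isUnit_iff_natAbs_eq, natAbs_det_of_mem_reps_sq_smul hdet hQ (c := 1) (by simpa using hA)]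
  simp

theorem adjugate_mul_mem_reps_smul {c : ℤ} (hA : A ∈ Reps Q (c • Q')) :
    (Q'.adjugate * Aᵀ * Q) * A = (c * Q'.det) • 1 := by
  rw [Matrix.mul_assoc, Matrix.mul_assoc, ← Matrix.mul_assoc Aᵀ, hA, Matrix.mul_smul,
    adjugate_mul, smul_smul]

theorem smul_mem_reps_sq_smul_iff {c : ℤ} (hc : c ≠ 0) :
    c • A ∈ Reps Q (c ^ 2 • Q') ↔ A ∈ Reps Q Q' := by
  have h : (c • A)ᵀ * Q * (c • A) = c ^ 2 • (Aᵀ * Q * A) := by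
    rw [transpose_smul, Matrix.smul_mul, Matrix.smul_mul, Matrix.mul_smul, smul_smul, sq]
  simp only [Reps, Set.mem_ofPred_eq, h]
  exact (smul_right_injective _ (pow_ne_zero 2 hc)).eq_iff

theorem dvd_apply_of_mem_reps_of_gcd_ne_one (hdet : Q'.det = Q.det) (hQ : Q.det ≠ 0) {p : ℕ}
    (hp : p.Prime) (hA : A ∈ Reps Q ((p : ℤ) ^ 2 • Q'))
    (hg : univ.gcd (fun ij : Fin m × Fin m => A ij.1 ij.2) ≠ 1) (i j : Fin m) :
    (p : ℤ) ∣ A i j := by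
  set g := univ.gcd fun ij : Fin m × Fin m => A ij.1 ij.2
  have hgA (i j : Fin m) : g ∣ A i j := gcd_dvd (mem_univ (i, j))
  obtain ⟨B, hB⟩ := exists_eq_smul_of_forall_dvd hgA
  have hgm : g.natAbs ^ m ∣ p ^ m := by
    rw [← Int.natAbs_pow, ← Int.natAbs_natCast p, ← natAbs_det_of_mem_reps_sq_smul hdet hQ hA,
      hB, det_smul, Fintype.card_fin]
    exact Int.natAbs_dvd_natAbs.2 (dvd_mul_right _ _)
  have hg0 : 0 ≤ g := Int.nonneg_of_normalize_eq_self normalize_gcd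
  have hgp : g.natAbs = p :=
    ((Nat.dvd_prime hp).1 ((Nat.pow_dvd_pow_iff i.pos.ne').1 hgm)).resolve_left (by omega)
  rw [← hgp]
  exact Int.natAbs_dvd.2 (hgA i j)

theorem reps_sq_smul_eq_primReps_union (hdet : Q'.det = Q.det) (hQ : Q.det ≠ 0) {p : ℕ}
    (hp : p.Prime) :
    Reps Q ((p : ℤ) ^ 2 • Q') =
      PrimReps Q ((p : ℤ) ^ 2 • Q') ∪ (fun M => (p : ℤ) • M) '' Reps Q Q' := by
  have hp0 : (p : ℤ) ≠ 0 := by exact_mod_cast hp.ne_zero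
  ext A
  refine ⟨fun hA => ?_, ?_⟩
  · by_cases hg : univ.gcd (fun ij : Fin m × Fin m => A ij.1 ij.2) = 1
    · exact Or.inl ⟨hA, hg⟩
    obtain ⟨M, rfl⟩ :=
      exists_eq_smul_of_forall_dvd (dvd_apply_of_mem_reps_of_gcd_ne_one hdet hQ hp hA hg)
    exact Or.inr ⟨M, (smul_mem_reps_sq_smul_iff hp0).1 hA, rfl⟩
  · rintro (hA | ⟨M, hM, rfl⟩)
    exacts [hA.1, (smul_mem_reps_sq_smul_iff hp0).2 hM]

theorem disjoint_primReps_image_smul {Q'' : Matrix (Fin m) (Fin m) ℤ} {c : ℤ}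
    (hc : ¬IsUnit c) :
    Disjoint (PrimReps Q Q'') ((fun M => c • M) '' Reps Q Q') := by
  refine Set.disjoint_left.2 ?_
  rintro _ ⟨-, hg⟩ ⟨M, -, rfl⟩
  exact gcd_entries_ne_one_of_dvd hc (fun i j => ⟨M i j, rfl⟩) hg

theorem exists_inDoubleCoset_diagonal_pow_of_mem_reps (hdet : Q'.det = Q.det) (hQ : Q.det ≠ 0)
    {p : ℕ} (hp : p.Prime) (hpQ : ¬(p : ℤ) ∣ Q.det)
    (hA : A ∈ Reps Q ((p : ℤ) ^ 2 • Q')) :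
    ∃ e : Fin m → ℕ, (∀ i, e i ≤ 2) ∧ ∑ i, e i = m ∧
      InDoubleCoset (diagonal fun i => (p : ℤ) ^ e i) A := by
  have hAdet : A.det.natAbs = p ^ m := natAbs_det_of_mem_reps_sq_smul hdet hQ hA
  obtain ⟨U, V, w, hU, hV, rfl⟩ := exists_eq_mul_diagonal_mul A fun h =>
    (pow_pos hp.pos m).ne (by simpa [h] using hAdet)
  have hprod : ∏ i, (w i).natAbs = p ^ m := by
    rw [← hAdet, det_mul, det_mul, det_diagonal, Int.natAbs_mul, Int.natAbs_mul,
      Int.isUnit_iff_natAbs_eq.1 hU, Int.isUnit_iff_natAbs_eq.1 hV, one_mul, mul_one]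
    exact (map_prod Int.natAbsHom w univ).symm
  obtain ⟨e, hwe, hsum⟩ := exists_pow_eq_of_prod_eq_prime_pow hp hprod
  have hw : ∀ i, w i ∣ (p : ℤ) ^ 2 * Q.det := fun i =>
    hdet ▸ dvd_of_mul_eq_smul_one hV (adjugate_mul_mem_reps_smul hA) i
  refine ⟨e, fun i => hp.le_of_pow_dvd_pow_mul (n := Q.det.natAbs) ?_ ?_, hsum, ?_⟩
  · exact fun h => hpQ (Int.natCast_dvd.2 h)
  · simpa [← hwe, Int.natAbs_mul] using Int.natAbs_dvd_natAbs.2 (hw i)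
  · have hdiag : (diagonal fun i => (p : ℤ) ^ e i) = diagonal fun i => ((w i).natAbs : ℤ) := by
      simp [hwe]
    rw [hdiag]
    exact (inDoubleCoset_diagonal_natAbs w).trans ⟨U, V, hU, hV, rfl⟩

end Representations

theorem lemma_1_2_general {k : ℕ} {m : ℕ} (hm : m = 2 * k + 1)
    (Q Q' : Matrix (Fin m) (Fin m) ℤ)
    (hQns : Q.det ≠ 0) (hsim : SimilarQF Q Q')
    (p : ℕ) (hp : p.Prime) (hpd : ¬ (p : ℤ) ∣ Q.det) :
    Reps Q (((p : ℤ)^2) • Q') =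
        PrimReps Q (((p : ℤ)^2) • Q') ∪ (fun M => (p : ℤ) • M) '' (Reps Q Q') ∧
      Disjoint (PrimReps Q (((p : ℤ)^2) • Q')) ((fun M => (p : ℤ) • M) '' (Reps Q Q')) ∧
      (Reps Q Q' ⊆ {U | IsUnit U.det}) ∧
      (∀ M ∈ Reps Q Q',
        InDoubleCoset ((p : ℤ) • (1 : Matrix (Fin m) (Fin m) ℤ)) ((p : ℤ) • M)) ∧
      (∀ M ∈ PrimReps Q (((p : ℤ)^2) • Q'),
        ∃ d : ℕ, 1 ≤ d ∧ d ≤ k ∧ InDoubleCoset (Dmat p m d) M) := by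
  have hdet : Q'.det = Q.det := hsim.1
  have hpu : ¬IsUnit (p : ℤ) := (Nat.prime_iff_prime_int.1 hp).not_isUnit
  refine ⟨reps_sq_smul_eq_primReps_union hdet hQns hp, disjoint_primReps_image_smul hpu,
    fun M hM => isUnit_det_of_mem_reps hdet hQns hM, fun M hM => ?_, ?_⟩
  · exact ⟨M, 1, isUnit_det_of_mem_reps hdet hQns hM, by simp,
      by rw [Matrix.mul_one, Matrix.mul_smul, Matrix.mul_one]⟩
  · rintro A ⟨hA, hprim⟩
    obtain ⟨e, he, hsum, hcoset⟩ :=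
      exists_inDoubleCoset_diagonal_pow_of_mem_reps hdet hQns hp hpd hA
    have hd := two_mul_card_fiber_zero_le he (by rw [hsum, Fintype.card_fin])
    rw [Fintype.card_fin] at hd
    exact ⟨#{i | e i = 0}, card_fiber_zero_pos_of_inDoubleCoset hpu hcoset hprim, by omega,
      (inDoubleCoset_dmat_diagonal_pow p he hsum).trans hcoset⟩

/-- Lemma 1.2. -/
theorem lemma_1_2 {k : ℕ} (hk : 1 ≤ k) {m : ℕ} (hm : m = 2 * k + 1)
    (Q Q' : Matrix (Fin m) (Fin m) ℤ)
    (hQI : IsIntegralQF Q) (hQ'I : IsIntegralQF Q')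
    (hQns : Q.det ≠ 0) (hsim : SimilarQF Q Q')
    (p : ℕ) (hp : p.Prime) (hpd : ¬ (p : ℤ) ∣ Q.det) :
    Reps Q (((p : ℤ)^2) • Q') =
        PrimReps Q (((p : ℤ)^2) • Q') ∪ (fun M => (p : ℤ) • M) '' (Reps Q Q') ∧
      Disjoint (PrimReps Q (((p : ℤ)^2) • Q')) ((fun M => (p : ℤ) • M) '' (Reps Q Q')) ∧
      (Reps Q Q' ⊆ {U | IsUnit U.det}) ∧
      (∀ M ∈ Reps Q Q',
        InDoubleCoset ((p : ℤ) • (1 : Matrix (Fin m) (Fin m) ℤ)) ((p : ℤ) • M)) ∧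
      (∀ M ∈ PrimReps Q (((p : ℤ)^2) • Q'),
        ∃ d : ℕ, 1 ≤ d ∧ d ≤ k ∧ InDoubleCoset (Dmat p m d) M) :=
  lemma_1_2_general hm Q Q' hQns hsim p hp hpd
end

section
/- Lemma 5.1: Let q and q'' be integral ternary quadratic forms with matrices Q and Q'', and let A ∈ ℤ^{3×3} satisfy ᵀA·Q·A = Q''. Then the induced algebra homomorphism φ_A : C(ℤ³,q'') → C(ℤ³,q) maps the special element t'' of C(ℤ³,q'') to (det A)·t, where t is the special element of C(ℤ³,q). -/
/-!
Since `ι(x)² = q(x)` is central, `(x, y, z) ↦ ι x · ι y · ι z - ι z · ι y · ι x` is an alternating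
trilinear map on `ℤ³`, and `t` is its value on the standard basis. The homomorphism `φ_A` acts on
this map by substituting `A` into its arguments, and any alternating map of top degree is
multiplied by `det A` under such a substitution.
-/

open Matrix

/-- The special element `t = e₁e₂e₃ - e₃e₂e₁` of the Clifford algebra `C(ℤ³,q)`. -/
noncomputable def specialT (q : QuadraticForm ℤ (Fin 3 → ℤ)) : CliffordAlgebra q :=
  CliffordAlgebra.ι q (Pi.single 0 1) * CliffordAlgebra.ι q (Pi.single 1 1) *
      CliffordAlgebra.ι q (Pi.single 2 1) -
    CliffordAlgebra.ι q (Pi.single 2 1) * CliffordAlgebra.ι q (Pi.single 1 1) *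
      CliffordAlgebra.ι q (Pi.single 0 1)

namespace AlternatingMap

variable {R M N ι : Type*} [CommRing R] [AddCommGroup M] [Module R M] [AddCommGroup N]
  [Module R N] [Fintype ι] [DecidableEq ι]

theorem eq_basis_det_smul (b : Module.Basis ι R M) (g : M [⋀^ι]→ₗ[R] N) (v : ι → M) :
    g v = b.det v • g b := by
  suffices g = (LinearMap.toSpanSingleton R N (g b)).compAlternatingMap b.det from
    congr($this v)
  refine b.ext_alternating fun i hi => ?_
  let σ : Equiv.Perm ι := Equiv.ofBijective i (Finite.injective_iff_bijective.1 hi)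
  change g (b ∘ σ) = b.det (b ∘ σ) • g b
  simp [AlternatingMap.map_perm, Module.Basis.det_self]

theorem map_comp_eq_det_smul (b : Module.Basis ι R M) (g : M [⋀^ι]→ₗ[R] N) (φ : M →ₗ[R] M)
    (v : ι → M) : g (φ ∘ v) = LinearMap.det φ • g v := by
  rw [g.eq_basis_det_smul b, g.eq_basis_det_smul b v, b.det_comp, mul_smul]

end AlternatingMap

namespace CliffordAlgebra

variable {R M : Type*} [CommRing R] [AddCommGroup M] [Module R M] (Q : QuadraticForm R M)

noncomputable def ιTripleSkew : M [⋀^Fin 3]→ₗ[R] CliffordAlgebra Q where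
  toMultilinearMap :=
    let P := (MultilinearMap.mkPiAlgebraFin R 3 (CliffordAlgebra Q)).compLinearMap fun _ => ι Q
    P - P.domDomCongr Fin.revPerm
  map_eq_zero_of_eq' v i j hv hij := by
    fin_cases i <;> fin_cases j <;>
      simp_all [List.ofFn_succ, Fin.revPerm, ← mul_assoc, Algebra.commutes]

theorem ιTripleSkew_apply (v : Fin 3 → M) :
    ιTripleSkew Q v = ι Q (v 0) * ι Q (v 1) * ι Q (v 2) - ι Q (v 2) * ι Q (v 1) * ι Q (v 0) := by
  simp [ιTripleSkew, List.ofFn_succ, Fin.revPerm, mul_assoc]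

variable {Q} {N : Type*} [AddCommGroup N] [Module R N] {Q' : QuadraticForm R N}

theorem map_ιTripleSkew (f : Q →qᵢ Q') (v : Fin 3 → M) :
    map f (ιTripleSkew Q v) = ιTripleSkew Q' (f ∘ v) := by
  simp [ιTripleSkew_apply]

end CliffordAlgebra

theorem specialT_eq_ιTripleSkew (q : QuadraticForm ℤ (Fin 3 → ℤ)) :
    specialT q = CliffordAlgebra.ιTripleSkew q (Pi.basisFun ℤ (Fin 3)) := by
  simp [specialT, CliffordAlgebra.ιTripleSkew_apply]

theorem lemma_5_1_general
    (q q'' : QuadraticForm ℤ (Fin 3 → ℤ))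
    (A : Matrix (Fin 3) (Fin 3) ℤ)
    (f : QuadraticMap.Isometry q'' q) (hf : ∀ x, f x = A.mulVec x) :
    CliffordAlgebra.map f (specialT q'') = A.det • specialT q := by
  have hfA : f.toLinearMap = toLin' A := LinearMap.ext hf
  rw [specialT_eq_ιTripleSkew, specialT_eq_ιTripleSkew, CliffordAlgebra.map_ιTripleSkew,
    ← LinearMap.det_toLin' A, ← hfA]
  exact AlternatingMap.map_comp_eq_det_smul (Pi.basisFun ℤ (Fin 3)) _ f.toLinearMap _

/-- Lemma 5.1: if `A ∈ R(q,q'')` then the induced homomorphism of Clifford algebras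
`φ_A : C(ℤ³,q'') → C(ℤ³,q)` maps the special element `t''` to `(det A)·t`. -/
theorem lemma_5_1 (Q Q'' : Matrix (Fin 3) (Fin 3) ℤ)
    (hQI : IsIntegralQF Q) (hQ''I : IsIntegralQF Q'')
    (q q'' : QuadraticForm ℤ (Fin 3 → ℤ))
    (hq : ∀ x, 2 * q x = x ⬝ᵥ Q.mulVec x)
    (hq'' : ∀ x, 2 * q'' x = x ⬝ᵥ Q''.mulVec x)
    (A : Matrix (Fin 3) (Fin 3) ℤ) (hA : Aᵀ * Q * A = Q'')
    (f : QuadraticMap.Isometry q'' q) (hf : ∀ x, f x = A.mulVec x) :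
    CliffordAlgebra.map f (specialT q'') = A.det • specialT q :=
  lemma_5_1_general q q'' A f hf
end
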